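/- arXiv:2001.08318 — 9 statements merged into one kernel-verified Lean document; each statement's English description precedes it below -/
import Mathlib

section
/- Let κ : ℝ≥0 → ℝ be of class K¹, let ρ₁ > 0 and 0 ≤ ρ₂ < 1, and for x⁰ ∈ ℝ define the solution x(t) = κ^{−1}((max{κ(|x⁰|)^{1−ρ₂} − t/ρ₁, 0})^{1/(1−ρ₂)})·sign(x⁰), where κ^{−1} is the inverse of κ as a bijection [0,∞) → [0,1). Then the settling-time function T(x⁰) = ρ₁·κ(|x⁰|)^{1−ρ₂} satisfies: (i) x(t) = 0 for all t ≥ T(x⁰); and (ii) T(x⁰) < ρ₁ for every x⁰ ∈ ℝ, so that sup_{x⁰ ∈ ℝ} T(x⁰) ≤ ρ₁, i.e., the origin is predefined-time stable with predefined time ρ₁. -/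
/-- A function `κ : ℝ≥0 → ℝ` (modeled as `κ : ℝ → ℝ` with properties on `[0,∞)`)
is of class `K¹` if it is continuous, strictly increasing, `κ 0 = 0` and
`κ r → 1` as `r → ∞`. -/
def ClassK1 (κ : ℝ → ℝ) : Prop :=
  ContinuousOn κ (Set.Ici 0) ∧ StrictMonoOn κ (Set.Ici 0) ∧ κ 0 = 0 ∧
    Filter.Tendsto κ Filter.atTop (nhds 1)

/-- Predefined-time stability: the solution
`x(t) = κinv((max{κ(|x0|)^(1-ρ₂) - t/ρ₁, 0})^(1/(1-ρ₂)))·sign(x0)`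
vanishes for all `t ≥ T(x0) = ρ₁·κ(|x0|)^(1-ρ₂)`, and the settling time
satisfies `T(x0) < ρ₁` for every initial condition, hence
`sup T(x0) ≤ ρ₁`. -/
theorem predefined_time_stability (κ κinv : ℝ → ℝ) (hκ : ClassK1 κ)
    (hinv_left : ∀ r : ℝ, 0 ≤ r → κinv (κ r) = r)
    (hinv_right : ∀ y : ℝ, 0 ≤ y → y < 1 → 0 ≤ κinv y ∧ κ (κinv y) = y)
    (ρ₁ ρ₂ : ℝ) (hρ₁ : 0 < ρ₁) (hρ₂0 : 0 ≤ ρ₂) (hρ₂1 : ρ₂ < 1) :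
    (∀ x0 : ℝ, ∀ t : ℝ, ρ₁ * (κ |x0|) ^ (1 - ρ₂) ≤ t →
      κinv ((max ((κ |x0|) ^ (1 - ρ₂) - t / ρ₁) 0) ^ (1 / (1 - ρ₂))) *
        Real.sign x0 = 0) ∧
    (∀ x0 : ℝ, ρ₁ * (κ |x0|) ^ (1 - ρ₂) < ρ₁) ∧
    (⨆ x0 : ℝ, ρ₁ * (κ |x0|) ^ (1 - ρ₂)) ≤ ρ₁ := by
  obtain ⟨hcont, hmono, h0, hlim⟩ := hκ
  have hexp : 0 < 1 - ρ₂ := by linarith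
  -- κ r < 1 for r ≥ 0
  have hlt1 : ∀ r : ℝ, 0 ≤ r → κ r < 1 := by
    intro r hr
    have h1 : κ r < κ (r + 1) :=
      hmono (Set.mem_Ici.mpr hr) (Set.mem_Ici.mpr (by linarith)) (by linarith)
    have h2 : κ (r + 1) ≤ 1 := by
      refine ge_of_tendsto hlim ?_
      filter_upwards [Filter.eventually_ge_atTop (r + 1)] with s hs
      rcases eq_or_lt_of_le hs with h | h
      · exact le_of_eq (congrArg κ h)
      · exact (hmono (Set.mem_Ici.mpr (by linarith)) (Set.mem_Ici.mpr (by linarith)) h).le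
    linarith
  have hge0 : ∀ r : ℝ, 0 ≤ r → 0 ≤ κ r := by
    intro r hr
    rcases eq_or_lt_of_le hr with h | h
    · simp [← h, h0]
    · have := hmono (Set.mem_Ici.mpr le_rfl) (Set.mem_Ici.mpr hr) h
      linarith [h0]
  have hpart2 : ∀ x0 : ℝ, ρ₁ * (κ |x0|) ^ (1 - ρ₂) < ρ₁ := by
    intro x0
    have h1 : (κ |x0|) ^ (1 - ρ₂) < 1 :=
      Real.rpow_lt_one (hge0 _ (abs_nonneg x0)) (hlt1 _ (abs_nonneg x0)) hexp
    nlinarith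
  refine ⟨?_, hpart2, ?_⟩
  · intro x0 t ht
    have hmax : max ((κ |x0|) ^ (1 - ρ₂) - t / ρ₁) 0 = 0 := by
      have : (κ |x0|) ^ (1 - ρ₂) ≤ t / ρ₁ := (le_div_iff₀ hρ₁).2 (by linarith [ht]; )
      exact max_eq_right (by linarith)
    rw [hmax, Real.zero_rpow (by positivity)]
    have := hinv_left 0 le_rfl
    rw [h0] at this
    rw [this, zero_mul]
  · refine ciSup_le fun x0 => (hpart2 x0).le
end

section
/- (Theorem 1, exact discretization) Let κ : ℝ≥0 → ℝ be of class K¹, let ρ₁ > 0, 0 ≤ ρ₂ < 1, h > 0, and x⁰ ∈ ℝ. Define the continuous-time solution x(t) = κ^{−1}((max{κ(|x⁰|)^{1−ρ₂} − t/ρ₁, 0})^{1/(1−ρ₂)})·sign(x⁰), and define the discrete-time sequence by x₀ = x⁰ and x_{k+1} = κ^{−1}((max{κ(|x_k|)^{1−ρ₂} − h/ρ₁, 0})^{1/(1−ρ₂)})·sign(x_k), where κ^{−1} is the inverse of κ as a bijection [0,∞) → [0,1). Then x_k = x(k·h) for every k ∈ ℕ. -/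
lemma max_sub_max (u c : ℝ) (hc : 0 ≤ c) : max (max u 0 - c) 0 = max (u - c) 0 := by
  rcases le_total u 0 with hu | hu
  · rw [max_eq_right hu, max_eq_right (by linarith), max_eq_right (by linarith)]
  · rw [max_eq_left hu]


/-- (Theorem 1: exact discretization.)  The discrete-time sequence
`x₀ = x⁰`, `x_{k+1} = κinv((max{κ(|x_k|)^(1-ρ₂) - h/ρ₁, 0})^(1/(1-ρ₂)))·sign(x_k)`
coincides at each step with the continuous-time solution
`x(t) = κinv((max{κ(|x⁰|)^(1-ρ₂) - t/ρ₁, 0})^(1/(1-ρ₂)))·sign(x⁰)` at the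
sampling instants: `x_k = x(k·h)` for every `k ∈ ℕ`. -/
theorem exact_discretization (κ κinv : ℝ → ℝ) (hκ : ClassK1 κ)
    (hinv_left : ∀ r : ℝ, 0 ≤ r → κinv (κ r) = r)
    (hinv_right : ∀ y : ℝ, 0 ≤ y → y < 1 → 0 ≤ κinv y ∧ κ (κinv y) = y)
    (ρ₁ ρ₂ h : ℝ) (hρ₁ : 0 < ρ₁) (hρ₂0 : 0 ≤ ρ₂) (hρ₂1 : ρ₂ < 1) (hh : 0 < h)
    (x0 : ℝ) (x : ℕ → ℝ) (hx0 : x 0 = x0)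
    (hrec : ∀ k : ℕ, x (k + 1) =
      κinv ((max ((κ |x k|) ^ (1 - ρ₂) - h / ρ₁) 0) ^ (1 / (1 - ρ₂))) *
        Real.sign (x k)) :
    ∀ k : ℕ, x k =
      κinv ((max ((κ |x0|) ^ (1 - ρ₂) - (k * h) / ρ₁) 0) ^ (1 / (1 - ρ₂))) *
        Real.sign x0 := by
  obtain ⟨hcont, hmono, hzero, hlim⟩ := hκ
  have hsub : (0:ℝ) < 1 - ρ₂ := by linarith
  have he : (0:ℝ) < 1 / (1 - ρ₂) := by positivity
  -- κ is nonneg and < 1 on [0,∞)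
  have hκpos : ∀ r : ℝ, 0 ≤ r → 0 ≤ κ r := by
    intro r hr
    rcases eq_or_lt_of_le hr with rfl | hr'
    · exact le_of_eq hzero.symm
    · exact le_of_lt (hzero ▸ hmono (Set.mem_Ici.mpr le_rfl) (Set.mem_Ici.mpr (le_of_lt hr')) hr')
  have hκlt1 : ∀ r : ℝ, 0 ≤ r → κ r < 1 := by
    intro r hr
    have h1 : κ r < κ (r + 1) := hmono (Set.mem_Ici.mpr hr) (Set.mem_Ici.mpr (by linarith)) (by linarith)
    have h2 : κ (r + 1) ≤ 1 := by
      refine ge_of_tendsto hlim ?_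
      filter_upwards [Filter.eventually_ge_atTop (r + 1)] with s hs
      rcases eq_or_lt_of_le hs with rfl | hs'
      · exact le_rfl
      · exact le_of_lt (hmono (Set.mem_Ici.mpr (by linarith)) (Set.mem_Ici.mpr (by linarith)) hs')
    linarith
  set a := κ |x0| with ha
  have ha0 : 0 ≤ a := hκpos _ (abs_nonneg _)
  have ha1 : a < 1 := hκlt1 _ (abs_nonneg _)
  have hinv0 : κinv 0 = 0 := by
    have := hinv_left 0 le_rfl
    rwa [hzero] at this
  have hM : ∀ t : ℝ, 0 ≤ t →
      0 ≤ max (a ^ (1 - ρ₂) - t) 0 ∧ max (a ^ (1 - ρ₂) - t) 0 < 1 := by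
    intro t ht
    refine ⟨le_max_right _ _, ?_⟩
    have h1 : a ^ (1 - ρ₂) < 1 := Real.rpow_lt_one ha0 ha1 hsub
    exact max_lt (by linarith) one_pos
  -- the rpow with exponent e = 1/(1-ρ₂) inverts rpow (1-ρ₂)
  have hrpow : ∀ u : ℝ, 0 ≤ u → (u ^ (1 / (1 - ρ₂))) ^ (1 - ρ₂) = u := by
    intro u hu
    rw [← Real.rpow_mul hu, one_div, inv_mul_cancel₀ (ne_of_gt hsub), Real.rpow_one]
  have habs0 : |x0| * Real.sign x0 = x0 := by
    rcases lt_trichotomy x0 0 with h' | rfl | h'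
    · rw [Real.sign_of_neg h', abs_of_neg h']; ring
    · simp [Real.sign_zero]
    · rw [Real.sign_of_pos h', abs_of_pos h', mul_one]
  intro k
  induction k with
  | zero =>
    have h0 : ((0:ℕ):ℝ) * h / ρ₁ = 0 := by norm_num
    rw [hx0, h0, sub_zero, max_eq_left (Real.rpow_nonneg ha0 _),
      ← Real.rpow_mul ha0, mul_one_div, div_self (ne_of_gt hsub),
      Real.rpow_one, hinv_left _ (abs_nonneg _), habs0]
  | succ k ih =>
    rw [hrec k, ih]
    rcases eq_or_ne x0 0 with rfl | hx0ne
    · -- x0 = 0 : everything is zero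
      simp only [Real.sign_zero, mul_zero, abs_zero, hzero,
        Real.zero_rpow (ne_of_gt hsub), zero_sub]
    · -- x0 ≠ 0
      set Mk := max (a ^ (1 - ρ₂) - (↑k * h) / ρ₁) 0 with hMk
      obtain ⟨hMk0, hMk1⟩ := hM ((↑k * h) / ρ₁) (by positivity)
      rw [← hMk] at hMk0 hMk1
      have hMke0 : 0 ≤ Mk ^ (1 / (1 - ρ₂)) := Real.rpow_nonneg hMk0 _
      have hMke1 : Mk ^ (1 / (1 - ρ₂)) < 1 := by
        rcases eq_or_lt_of_le hMk0 with h' | h'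
        · rw [← h', Real.zero_rpow (ne_of_gt he)]; norm_num
        · exact Real.rpow_lt_one hMk0 hMk1 (by positivity)
      obtain ⟨hy0, hyκ⟩ := hinv_right _ hMke0 hMke1
      set y := κinv (Mk ^ (1 / (1 - ρ₂))) with hy
      have hsgn : |Real.sign x0| = 1 := by
        rcases lt_or_gt_of_ne hx0ne with h' | h'
        · rw [Real.sign_of_neg h']; norm_num
        · rw [Real.sign_of_pos h']; norm_num
      have habs : |y * Real.sign x0| = y := by
        rw [abs_mul, hsgn, mul_one, abs_of_nonneg hy0]
      rcases eq_or_lt_of_le hy0 with h0 | hypos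
      · -- y = 0 : both sides vanish
        have hMkz : Mk = 0 := by
          have : κ y = 0 := by rw [← h0, hzero]
          have h2 := hrpow Mk hMk0
          rw [hyκ] at this
          rw [this, Real.zero_rpow (ne_of_gt hsub)] at h2
          exact h2.symm
        have hMk1z : max (a ^ (1 - ρ₂) - (↑(k+1) * h) / ρ₁) 0 = 0 := by
          apply max_eq_right
          have h3 : a ^ (1 - ρ₂) - (↑k * h) / ρ₁ ≤ 0 := by
            by_contra hc
            push_neg at hc
            rw [hMk] at hMkz
            rw [max_eq_left (le_of_lt hc)] at hMkz
            linarith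
          have h4 : (↑k * h) / ρ₁ ≤ ((↑(k+1) : ℝ) * h) / ρ₁ := by
            have hk : (k:ℝ) ≤ ((k+1:ℕ):ℝ) := by push_cast; linarith
            gcongr
          linarith
        rw [← h0, zero_mul, abs_zero, hzero, Real.zero_rpow (ne_of_gt hsub),
          zero_sub, max_eq_right (neg_nonpos.mpr (by positivity) : -(h/ρ₁) ≤ (0:ℝ)),
          Real.zero_rpow (ne_of_gt he), hinv0, zero_mul, hMk1z,
          Real.zero_rpow (ne_of_gt he), hinv0, zero_mul]
      · -- y > 0
        have hsgn2 : Real.sign (y * Real.sign x0) = Real.sign x0 := by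
          rcases lt_or_gt_of_ne hx0ne with h' | h'
          · rw [Real.sign_of_neg h', mul_neg_one, Real.sign_of_neg (by linarith : -y < 0)]
          · rw [Real.sign_of_pos h', mul_one, Real.sign_of_pos hypos]
        rw [hsgn2, habs, hyκ, hrpow Mk hMk0, hMk,
          max_sub_max _ _ (by positivity : (0:ℝ) ≤ h / ρ₁)]
        congr 3
        push_cast
        ring
end

section
/- Let κ : ℝ≥0 → ℝ be of class K¹, let ρ₁ > 0, 0 ≤ ρ₂ < 1, h > 0, and x⁰ ∈ ℝ, and define the sequence x₀ = x⁰, x_{k+1} = κ^{−1}((max{κ(|x_k|)^{1−ρ₂} − h/ρ₁, 0})^{1/(1−ρ₂)})·sign(x_k), where κ^{−1} is the inverse of κ as a bijection [0,∞) → [0,1). Then for every k ∈ ℕ, κ(|x_k|)^{1−ρ₂} = max{κ(|x⁰|)^{1−ρ₂} − k·h/ρ₁, 0} and sign(x_k) = sign(x⁰) whenever x_k ≠ 0. -/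
/-- For the exact discretization sequence
`x₀ = x⁰`, `x_{k+1} = κinv((max{κ(|x_k|)^(1-ρ₂) - h/ρ₁, 0})^(1/(1-ρ₂)))·sign(x_k)`,
for every `k` one has `κ(|x_k|)^(1-ρ₂) = max{κ(|x⁰|)^(1-ρ₂) - k·h/ρ₁, 0}` and
`sign(x_k) = sign(x⁰)` whenever `x_k ≠ 0`. -/
theorem discretization_closed_form (κ κinv : ℝ → ℝ) (hκ : ClassK1 κ)
    (hinv_left : ∀ r : ℝ, 0 ≤ r → κinv (κ r) = r)
    (hinv_right : ∀ y : ℝ, 0 ≤ y → y < 1 → 0 ≤ κinv y ∧ κ (κinv y) = y)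
    (ρ₁ ρ₂ h : ℝ) (hρ₁ : 0 < ρ₁) (hρ₂0 : 0 ≤ ρ₂) (hρ₂1 : ρ₂ < 1) (hh : 0 < h)
    (x0 : ℝ) (x : ℕ → ℝ) (hx0 : x 0 = x0)
    (hrec : ∀ k : ℕ, x (k + 1) =
      κinv ((max ((κ |x k|) ^ (1 - ρ₂) - h / ρ₁) 0) ^ (1 / (1 - ρ₂))) *
        Real.sign (x k)) :
    ∀ k : ℕ,
      (κ |x k|) ^ (1 - ρ₂) = max ((κ |x0|) ^ (1 - ρ₂) - (k * h) / ρ₁) 0 ∧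
      (x k ≠ 0 → Real.sign (x k) = Real.sign x0) := by
  obtain ⟨hcont, hmono, hzero, htend⟩ := hκ
  have he : (0:ℝ) < 1 - ρ₂ := by linarith
  have hκnn : ∀ r : ℝ, 0 ≤ r → 0 ≤ κ r := by
    intro r hr
    have := hmono.monotoneOn (Set.mem_Ici.mpr le_rfl) (Set.mem_Ici.mpr hr) hr
    linarith [hzero ▸ this]
  have hκlt1 : ∀ r : ℝ, 0 ≤ r → κ r < 1 := by
    intro r hr
    have h1 : κ r < κ (r + 1) :=
      hmono (Set.mem_Ici.mpr hr) (Set.mem_Ici.mpr (by linarith)) (by linarith)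
    have h2 : κ (r + 1) ≤ 1 := by
      refine ge_of_tendsto htend ?_
      filter_upwards [Filter.eventually_ge_atTop (r + 1)] with s hs
      exact hmono.monotoneOn (Set.mem_Ici.mpr (by linarith)) (Set.mem_Ici.mpr (by linarith)) hs
    linarith
  have hcpos : 0 < h / ρ₁ := div_pos hh hρ₁
  have hmax : ∀ a : ℝ, max (max a 0 - h / ρ₁) 0 = max (a - h / ρ₁) 0 := by
    intro a
    rcases le_total a 0 with h1 | h1
    · rw [max_eq_right h1, max_eq_right (by linarith), max_eq_right (by linarith)]
    · rw [max_eq_left h1]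
  intro k
  induction k with
  | zero =>
    constructor
    · rw [hx0]
      push_cast
      rw [zero_mul, zero_div, sub_zero, max_eq_left]
      exact Real.rpow_nonneg (hκnn _ (abs_nonneg _)) _
    · intro _; rw [hx0]
  | succ k ih =>
    obtain ⟨ih1, ih2⟩ := ih
    by_cases hxk : x k = 0
    · have hx1 : x (k + 1) = 0 := by
        rw [hrec k, hxk, Real.sign_zero, mul_zero]
      have hz : (κ |x k|) ^ (1 - ρ₂) = 0 := by
        rw [hxk, abs_zero, hzero, Real.zero_rpow he.ne']
      have hle : (κ |x0|) ^ (1 - ρ₂) - (k : ℝ) * h / ρ₁ ≤ 0 := by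
        by_contra hc
        push_neg at hc
        rw [hz] at ih1
        rw [max_eq_left hc.le] at ih1
        linarith
      constructor
      · rw [hx1, abs_zero, hzero, Real.zero_rpow he.ne']
        symm
        rw [max_eq_right]
        push_cast
        have : ((k:ℝ) + 1) * h / ρ₁ = (k:ℝ) * h / ρ₁ + h / ρ₁ := by ring
        rw [this]
        linarith
      · intro hne; exact absurd hx1 hne
    · set M := max ((κ |x k|) ^ (1 - ρ₂) - h / ρ₁) 0 with hM
      have hM0 : 0 ≤ M := le_max_right _ _
      have hM1 : M < 1 := by
        have hb0 : 0 ≤ κ |x k| := hκnn _ (abs_nonneg _)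
        have hb1 : κ |x k| < 1 := hκlt1 _ (abs_nonneg _)
        have : (κ |x k|) ^ (1 - ρ₂) ≤ 1 := Real.rpow_le_one hb0 hb1.le he.le
        refine max_lt (by linarith) one_pos
      set y := M ^ (1 / (1 - ρ₂)) with hy
      have hy0 : 0 ≤ y := Real.rpow_nonneg hM0 _
      have hy1 : y < 1 := by
        rcases eq_or_lt_of_le hM0 with hM0' | hM0'
        · rw [hy, ← hM0', Real.zero_rpow (by positivity)]; exact one_pos
        · exact Real.rpow_lt_one hM0 hM1 (by positivity)
      obtain ⟨hc0, hcκ⟩ := hinv_right y hy0 hy1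
      have hyM : y ^ (1 - ρ₂) = M := by
        rw [hy, ← Real.rpow_mul hM0]
        rw [one_div, inv_mul_cancel₀ he.ne', Real.rpow_one]
      have habs : |x (k + 1)| = κinv y := by
        rw [hrec k]
        rw [abs_mul, abs_of_nonneg hc0]
        rcases lt_or_gt_of_ne hxk with hneg | hpos
        · rw [Real.sign_of_neg hneg]; simp
        · rw [Real.sign_of_pos hpos]; simp
      have hmain : (κ |x (k + 1)|) ^ (1 - ρ₂) = M := by
        rw [habs, hcκ, hyM]
      constructor
      · rw [hmain, hM, ih1, hmax]
        push_cast
        have : ((k:ℝ) + 1) * h / ρ₁ = (k:ℝ) * h / ρ₁ + h / ρ₁ := by ring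
        rw [this]
        ring_nf
      · intro hne
        have hcpos' : 0 < κinv y := by
          rcases eq_or_lt_of_le hc0 with h' | h'
          · exfalso; apply hne
            rw [hrec k, ← h', zero_mul]
          · exact h'
        rcases lt_or_gt_of_ne hxk with hneg | hpos
        · have hx1neg : x (k + 1) < 0 := by
            rw [hrec k, Real.sign_of_neg hneg]
            nlinarith
          rw [Real.sign_of_neg hx1neg, Real.sign_of_neg hneg] at *
          exact ih2 hxk
        · have hx1pos : 0 < x (k + 1) := by
            rw [hrec k, Real.sign_of_pos hpos]
            nlinarith
          rw [Real.sign_of_pos hx1pos, Real.sign_of_pos hpos] at *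
          exact ih2 hxk
end

section
/- (Corollary to Theorem 1) Let κ : ℝ≥0 → ℝ be of class K¹, let ρ₁ > 0, 0 ≤ ρ₂ < 1, h > 0, and x⁰ ∈ ℝ, and define the sequence x₀ = x⁰, x_{k+1} = κ^{−1}((max{κ(|x_k|)^{1−ρ₂} − h/ρ₁, 0})^{1/(1−ρ₂)})·sign(x_k), where κ^{−1} is the inverse of κ as a bijection [0,∞) → [0,1). Then x_k = 0 for every k ≥ ⌈ρ₁/h⌉, where ⌈·⌉ is the ceiling function. -/
/-- (Corollary to Theorem 1.)  The exact discretization sequence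
`x₀ = x⁰`, `x_{k+1} = κinv((max{κ(|x_k|)^(1-ρ₂) - h/ρ₁, 0})^(1/(1-ρ₂)))·sign(x_k)`
satisfies `x_k = 0` for every `k ≥ ⌈ρ₁/h⌉`. -/
theorem discretization_settles (κ κinv : ℝ → ℝ) (hκ : ClassK1 κ)
    (hinv_left : ∀ r : ℝ, 0 ≤ r → κinv (κ r) = r)
    (hinv_right : ∀ y : ℝ, 0 ≤ y → y < 1 → 0 ≤ κinv y ∧ κ (κinv y) = y)
    (ρ₁ ρ₂ h : ℝ) (hρ₁ : 0 < ρ₁) (hρ₂0 : 0 ≤ ρ₂) (hρ₂1 : ρ₂ < 1) (hh : 0 < h)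
    (x0 : ℝ) (x : ℕ → ℝ) (hx0 : x 0 = x0)
    (hrec : ∀ k : ℕ, x (k + 1) =
      κinv ((max ((κ |x k|) ^ (1 - ρ₂) - h / ρ₁) 0) ^ (1 / (1 - ρ₂))) *
        Real.sign (x k)) :
    ∀ k : ℕ, ⌈ρ₁ / h⌉₊ ≤ k → x k = 0 := by
  obtain ⟨hcont, hmono, hzero, htend⟩ := hκ
  have h1ρ : (0:ℝ) < 1 - ρ₂ := by linarith
  have hκ_nonneg : ∀ r : ℝ, 0 ≤ r → 0 ≤ κ r := by
    intro r hr
    rcases eq_or_lt_of_le hr with h' | h'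
    · simp [← h', hzero]
    · have := hmono (Set.mem_Ici.2 le_rfl) (Set.mem_Ici.2 hr) h'
      linarith [hzero, this]
  have hκ_lt_one : ∀ r : ℝ, 0 ≤ r → κ r < 1 := by
    intro r hr
    have h1 : κ r < κ (r + 1) :=
      hmono (Set.mem_Ici.2 hr) (Set.mem_Ici.2 (by linarith)) (by linarith)
    have h2 : κ (r + 1) ≤ 1 := by
      refine ge_of_tendsto htend ?_
      filter_upwards [Filter.eventually_ge_atTop (r + 1)] with s hs
      exact (hmono.monotoneOn (Set.mem_Ici.2 (by linarith))
        (Set.mem_Ici.2 (by linarith)) hs)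
    linarith
  -- invariant
  have key : ∀ k : ℕ, (κ |x k|) ^ (1 - ρ₂) ≤ max (1 - (k : ℝ) * (h / ρ₁)) 0 := by
    intro k
    induction k with
    | zero =>
      have : (κ |x 0|) ^ (1 - ρ₂) ≤ 1 :=
        Real.rpow_le_one (hκ_nonneg _ (abs_nonneg _))
          (hκ_lt_one _ (abs_nonneg _)).le h1ρ.le
      refine this.trans ?_
      simp
    | succ k ih =>
      set a := (κ |x k|) ^ (1 - ρ₂) with ha
      have ha_nonneg : 0 ≤ a := Real.rpow_nonneg (hκ_nonneg _ (abs_nonneg _)) _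
      have ha_lt : a < 1 :=
        Real.rpow_lt_one (hκ_nonneg _ (abs_nonneg _)) (hκ_lt_one _ (abs_nonneg _)) h1ρ
      set b := max (a - h / ρ₁) 0 with hb
      have hb_nonneg : 0 ≤ b := le_max_right _ _
      have hb_lt : b < 1 := by
        have : a - h / ρ₁ < 1 := by
          have : 0 < h / ρ₁ := div_pos hh hρ₁
          linarith
        exact max_lt this one_pos
      set y := b ^ (1 / (1 - ρ₂)) with hy
      have hy_nonneg : 0 ≤ y := Real.rpow_nonneg hb_nonneg _
      have hy_lt : y < 1 := by
        rcases eq_or_lt_of_le hb_nonneg with h' | h'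
        · rw [hy, ← h', Real.zero_rpow (by positivity)]; norm_num
        · exact Real.rpow_lt_one hb_nonneg hb_lt (by positivity)
      obtain ⟨hinv_nn, hinv_eq⟩ := hinv_right y hy_nonneg hy_lt
      have hstepbound : b ≤ max (1 - ((k : ℕ) + 1 : ℝ) * (h / ρ₁)) 0 := by
        rcases le_max_iff.1 ih with h' | h'
        · rcases max_cases (a - h / ρ₁) 0 with ⟨he, _⟩ | ⟨he, _⟩
          · rw [hb, he]
            refine le_max_of_le_left ?_
            push_cast
            linarith
          · rw [hb, he]; exact le_max_right _ _
        · have : a = 0 := le_antisymm h' ha_nonneg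
          have : b = 0 := by
            rw [hb, this]
            simp [le_of_lt (div_pos hh hρ₁)]
          rw [this]; exact le_max_right _ _
      rcases eq_or_ne (x k) 0 with hx | hx
      · have : x (k + 1) = 0 := by rw [hrec k, hx, Real.sign_zero, mul_zero]
        rw [this]
        simp only [abs_zero, hzero]
        rw [Real.zero_rpow (ne_of_gt h1ρ)]
        exact le_max_right _ _
      · have hsign : |Real.sign (x k)| = 1 := by
          rcases lt_or_gt_of_ne hx with h' | h'
          · rw [Real.sign_of_neg h']; norm_num
          · rw [Real.sign_of_pos h']; norm_num
        have habs : |x (k + 1)| = κinv y := by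
          rw [hrec k, abs_mul, hsign, mul_one, abs_of_nonneg hinv_nn]
        have : (κ |x (k + 1)|) ^ (1 - ρ₂) = b := by
          rw [habs, hinv_eq, hy, ← Real.rpow_mul hb_nonneg,
            one_div_mul_cancel (ne_of_gt h1ρ), Real.rpow_one]
        rw [this]
        push_cast
        exact hstepbound
  intro k hk
  have hkk : ρ₁ / h ≤ (k : ℝ) := (Nat.ceil_le).1 hk
  have hmax0 : max (1 - (k : ℝ) * (h / ρ₁)) 0 = 0 := by
    have h1 : (1 : ℝ) ≤ (k : ℝ) * (h / ρ₁) := by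
      have := mul_le_mul_of_nonneg_right hkk (le_of_lt (div_pos hh hρ₁))
      calc (1:ℝ) = (ρ₁ / h) * (h / ρ₁) := by field_simp
        _ ≤ (k : ℝ) * (h / ρ₁) := this
    exact max_eq_right (by linarith)
  have hle := key k
  rw [hmax0] at hle
  have hnn : 0 ≤ (κ |x k|) ^ (1 - ρ₂) := Real.rpow_nonneg (hκ_nonneg _ (abs_nonneg _)) _
  have heq0 : (κ |x k|) ^ (1 - ρ₂) = 0 := le_antisymm hle hnn
  have hκ0 : κ |x k| = 0 := by
    by_contra hne
    exact hne ((Real.rpow_eq_zero (hκ_nonneg _ (abs_nonneg _)) (ne_of_gt h1ρ)).1 heq0)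
  have : |x k| = 0 := by
    have := hmono.injOn (Set.mem_Ici.2 (abs_nonneg (x k))) (Set.mem_Ici.2 le_rfl)
      (by rw [hκ0, hzero])
    exact this
  exact abs_eq_zero.1 this
end

section
/- (Implicit Euler identity) Let κ : ℝ≥0 → ℝ be of class K¹, let ρ₁ > 0, 0 ≤ ρ₂ < 1, h > 0, and x_k ∈ ℝ, and set x_{k+1} = κ^{−1}((max{κ(|x_k|)^{1−ρ₂} − h/ρ₁, 0})^{1/(1−ρ₂)})·sign(x_k), where κ^{−1} is the inverse of κ as a bijection [0,∞) → [0,1). If x_{k+1} ≠ 0, then sign(x_{k+1}) = sign(x_k) and κ(|x_{k+1}|)^{1−ρ₂}·sign(x_{k+1}) = κ(|x_k|)^{1−ρ₂}·sign(x_k) − (h/ρ₁)·sign(x_{k+1}); i.e., the update is the implicit (backward) Euler step of the transformed system ẇ = −(1/ρ₁)·sign(w) in the coordinate w = κ(|x|)^{1−ρ₂}·sign(x). -/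
/-!
Write `M = max (κ(|x_k|)^(1-ρ₂) - h/ρ₁) 0`, `a = M^(1/(1-ρ₂))` and `y = κ⁻¹(a)`, so that
`x_{k+1} = y · sign x_k`. Since `κ` maps `[0,∞)` into `[0,1)`, so does the step, hence `a` lies in
the range of `κ`, `κ(y) = a` and `κ(|x_{k+1}|)^(1-ρ₂) = a^(1-ρ₂) = M`. The hypothesis
`x_{k+1} ≠ 0` forces `y > 0`, hence `M > 0`: the maximum is attained by its first argument and
the identity becomes linear.
-/

open Filter Set Topology Real

theorem StrictMonoOn.lt_of_tendsto_atTop {α β : Type*} [LinearOrder α] [NoMaxOrder α]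
    [Preorder β] [TopologicalSpace β] [ClosedIciTopology β] {f : α → β} {a : α} {L : β}
    (hf : StrictMonoOn f (Ici a)) (hL : Tendsto f atTop (𝓝 L)) {r : α} (hr : a ≤ r) :
    f r < L := by
  have : Nonempty α := ⟨a⟩
  obtain ⟨s, hrs⟩ := exists_gt r
  have has : a ≤ s := hr.trans hrs.le
  refine (hf hr has hrs).trans_le (ge_of_tendsto hL ?_)
  filter_upwards [eventually_ge_atTop s] with t hst
  exact hf.monotoneOn has (has.trans hst) hst

namespace ClassK1

variable {κ : ℝ → ℝ} {r : ℝ}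

theorem nonneg (hκ : ClassK1 κ) (hr : 0 ≤ r) : 0 ≤ κ r :=
  hκ.2.2.1 ▸ hκ.2.1.monotoneOn self_mem_Ici hr hr

theorem pos (hκ : ClassK1 κ) (hr : 0 < r) : 0 < κ r :=
  hκ.2.2.1 ▸ hκ.2.1 self_mem_Ici hr.le hr

theorem lt_one (hκ : ClassK1 κ) (hr : 0 ≤ r) : κ r < 1 :=
  hκ.2.1.lt_of_tendsto_atTop hκ.2.2.2 hr

end ClassK1

theorem Real.sign_mul_sign_of_pos {y : ℝ} (hy : 0 < y) (x : ℝ) :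
    Real.sign (y * Real.sign x) = Real.sign x := by
  rcases Real.sign_apply_eq x with h | h | h <;> rw [h]
  · exact Real.sign_of_neg (by linarith)
  · simp [Real.sign_zero]
  · exact Real.sign_of_pos (by linarith)

theorem Real.abs_mul_sign {x : ℝ} (hx : x ≠ 0) (y : ℝ) : |y * Real.sign x| = |y| := by
  rcases Real.sign_apply_eq_of_ne_zero x hx with h | h <;> simp [h]

theorem implicit_euler_identity_general (κ κinv : ℝ → ℝ) (hκ : ClassK1 κ)
    (hinv_right : ∀ y : ℝ, 0 ≤ y → y < 1 → 0 ≤ κinv y ∧ κ (κinv y) = y)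
    (ρ₁ ρ₂ h : ℝ) (hρ₁ : 0 < ρ₁) (hρ₂1 : ρ₂ < 1) (hh : 0 < h)
    (xk xk1 : ℝ)
    (hstep : xk1 =
      κinv ((max ((κ |xk|) ^ (1 - ρ₂) - h / ρ₁) 0) ^ (1 / (1 - ρ₂))) *
        Real.sign xk)
    (hne : xk1 ≠ 0) :
    Real.sign xk1 = Real.sign xk ∧
      (κ |xk1|) ^ (1 - ρ₂) * Real.sign xk1 =
        (κ |xk|) ^ (1 - ρ₂) * Real.sign xk - (h / ρ₁) * Real.sign xk1 := by
  have hp : 0 < 1 - ρ₂ := sub_pos.2 hρ₂1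
  set M := max ((κ |xk|) ^ (1 - ρ₂) - h / ρ₁) 0
  have hM0 : 0 ≤ M := le_max_right _ _
  have hM1 : M < 1 := by
    have hκ_pow : κ |xk| ^ (1 - ρ₂) < 1 :=
      rpow_lt_one (hκ.nonneg (abs_nonneg xk)) (hκ.lt_one (abs_nonneg xk)) hp
    exact max_lt (by linarith [div_pos hh hρ₁]) one_pos
  have hMa : (M ^ (1 / (1 - ρ₂))) ^ (1 - ρ₂) = M := by rw [one_div, rpow_inv_rpow hM0 hp.ne']
  set a := M ^ (1 / (1 - ρ₂))
  obtain ⟨hy0, hκy⟩ := hinv_right a (rpow_nonneg hM0 _) (rpow_lt_one hM0 hM1 (by positivity))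
  set y := κinv a
  have hxk : xk ≠ 0 := fun h0 => hne (by simp [hstep, h0])
  have hy : 0 < y := hy0.lt_of_ne' fun h0 => hne (by simp [hstep, h0])
  have hMpos : 0 < M := hMa ▸ rpow_pos_of_pos (hκy ▸ hκ.pos hy) _
  have hM : M = κ |xk| ^ (1 - ρ₂) - h / ρ₁ :=
    max_eq_left ((lt_max_iff.1 hMpos).resolve_right (lt_irrefl 0)).le
  have hsign : Real.sign xk1 = Real.sign xk := hstep ▸ Real.sign_mul_sign_of_pos hy xk
  have hκ_xk1 : κ |xk1| = a := by rw [hstep, Real.abs_mul_sign hxk, abs_of_pos hy, hκy]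
  refine ⟨hsign, ?_⟩
  rw [hκ_xk1, hMa, hM, hsign]
  ring

/-- (Implicit Euler identity.)  If
`x_{k+1} = κinv((max{κ(|x_k|)^(1-ρ₂) - h/ρ₁, 0})^(1/(1-ρ₂)))·sign(x_k)` and
`x_{k+1} ≠ 0`, then `sign(x_{k+1}) = sign(x_k)` and
`κ(|x_{k+1}|)^(1-ρ₂)·sign(x_{k+1}) = κ(|x_k|)^(1-ρ₂)·sign(x_k) - (h/ρ₁)·sign(x_{k+1})`,
i.e. the update is the implicit (backward) Euler step of `ẇ = -(1/ρ₁)·sign(w)`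
in the coordinate `w = κ(|x|)^(1-ρ₂)·sign(x)`. -/
theorem implicit_euler_identity (κ κinv : ℝ → ℝ) (hκ : ClassK1 κ)
    (hinv_left : ∀ r : ℝ, 0 ≤ r → κinv (κ r) = r)
    (hinv_right : ∀ y : ℝ, 0 ≤ y → y < 1 → 0 ≤ κinv y ∧ κ (κinv y) = y)
    (ρ₁ ρ₂ h : ℝ) (hρ₁ : 0 < ρ₁) (hρ₂0 : 0 ≤ ρ₂) (hρ₂1 : ρ₂ < 1) (hh : 0 < h)
    (xk xk1 : ℝ)
    (hstep : xk1 =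
      κinv ((max ((κ |xk|) ^ (1 - ρ₂) - h / ρ₁) 0) ^ (1 / (1 - ρ₂))) *
        Real.sign xk)
    (hne : xk1 ≠ 0) :
    Real.sign xk1 = Real.sign xk ∧
      (κ |xk1|) ^ (1 - ρ₂) * Real.sign xk1 =
        (κ |xk|) ^ (1 - ρ₂) * Real.sign xk - (h / ρ₁) * Real.sign xk1 :=
  implicit_euler_identity_general κ κinv hκ hinv_right ρ₁ ρ₂ h hρ₁ hρ₂1 hh xk xk1 hstep hne
end

section
/- Let κ : ℝ≥0 → ℝ be of class K¹ and continuously differentiable on (0, ∞) with κ'(r) > 0 for all r > 0, let ρ₁ > 0 and 0 < ρ₂ < 1. Suppose x : (a, b) → ℝ is differentiable, x(t) ≠ 0 for all t ∈ (a, b), and x'(t) = −(1/(ρ₁(1−ρ₂)))·(κ(|x(t)|)^{ρ₂}/κ'(|x(t)|))·sign(x(t)) on (a, b). Then the transformed function w(t) = κ(|x(t)|)^{1−ρ₂}·sign(x(t)) is differentiable on (a, b) with w'(t) = −(1/ρ₁)·sign(w(t)). -/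
/-- If `x : (a,b) → ℝ` is a nonvanishing differentiable solution of
`x' = -(1/(ρ₁(1-ρ₂)))·(κ(|x|)^ρ₂/κ'(|x|))·sign(x)`, then the transformed
function `w(t) = κ(|x(t)|)^(1-ρ₂)·sign(x(t))` is differentiable with
`w'(t) = -(1/ρ₁)·sign(w(t))`. -/
theorem transformed_dynamics (κ κ' : ℝ → ℝ) (hκ : ClassK1 κ)
    (hderiv : ∀ r : ℝ, 0 < r → HasDerivAt κ (κ' r) r)
    (hκ'cont : ContinuousOn κ' (Set.Ioi 0))
    (hκ'pos : ∀ r : ℝ, 0 < r → 0 < κ' r)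
    (ρ₁ ρ₂ : ℝ) (hρ₁ : 0 < ρ₁) (hρ₂0 : 0 < ρ₂) (hρ₂1 : ρ₂ < 1)
    (a b : ℝ) (x : ℝ → ℝ)
    (hxne : ∀ t ∈ Set.Ioo a b, x t ≠ 0)
    (hxode : ∀ t ∈ Set.Ioo a b,
      HasDerivAt x
        (-(1 / (ρ₁ * (1 - ρ₂))) * ((κ |x t|) ^ ρ₂ / κ' |x t|) * Real.sign (x t))
        t) :
    ∀ t ∈ Set.Ioo a b,
      HasDerivAt (fun s => (κ |x s|) ^ (1 - ρ₂) * Real.sign (x s))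
        (-(1 / ρ₁) * Real.sign ((κ |x t|) ^ (1 - ρ₂) * Real.sign (x t))) t := by
  obtain ⟨-, hmono, h0, -⟩ := hκ
  intro t ht
  have hxt := hxne t ht
  have hx' := hxode t ht
  set σ := Real.sign (x t) with hσdef
  set D := -(1 / (ρ₁ * (1 - ρ₂))) * ((κ |x t|) ^ ρ₂ / κ' |x t|) * σ with hD
  have hpos : (0:ℝ) < |x t| := abs_pos.mpr hxt
  have hκpos : 0 < κ |x t| := by
    have := hmono (le_refl (0:ℝ)) (le_of_lt hpos) hpos
    rwa [h0] at this
  have hσ : σ = 1 ∨ σ = -1 := by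
    rcases lt_or_gt_of_ne hxt with h | h
    · right; exact Real.sign_of_neg h
    · left; exact Real.sign_of_pos h
  have hev : ∀ᶠ s in nhds t, |x s| = σ * x s ∧ Real.sign (x s) = σ := by
    rcases lt_or_gt_of_ne hxt with h | h
    · have : ∀ᶠ s in nhds t, x s < 0 :=
        hx'.continuousAt.preimage_mem_nhds (Iio_mem_nhds h)
      have hσv : σ = -1 := Real.sign_of_neg h
      filter_upwards [this] with s hs
      rw [hσv]
      exact ⟨by rw [abs_of_neg hs]; ring, Real.sign_of_neg hs⟩
    · have : ∀ᶠ s in nhds t, 0 < x s :=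
        hx'.continuousAt.preimage_mem_nhds (Ioi_mem_nhds h)
      have hσv : σ = 1 := Real.sign_of_pos h
      filter_upwards [this] with s hs
      rw [hσv]
      exact ⟨by rw [abs_of_pos hs]; ring, Real.sign_of_pos hs⟩
  have habs : HasDerivAt (fun s => |x s|) (σ * D) t := by
    refine HasDerivAt.congr_of_eventuallyEq (hx'.const_mul σ) ?_
    filter_upwards [hev] with s hs using hs.1
  have hκx : HasDerivAt (fun s => κ |x s|) (κ' |x t| * (σ * D)) t :=
    (hderiv _ hpos).comp t habs
  have hrpow : HasDerivAt (fun s => κ |x s| ^ (1 - ρ₂))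
      ((1 - ρ₂) * κ |x t| ^ (1 - ρ₂ - 1) * (κ' |x t| * (σ * D))) t := by
    have := hκx.rpow_const (p := 1 - ρ₂) (Or.inl hκpos.ne')
    convert this using 1
    ring
  have hw : HasDerivAt (fun s => (κ |x s|) ^ (1 - ρ₂) * Real.sign (x s))
      ((1 - ρ₂) * κ |x t| ^ (1 - ρ₂ - 1) * (κ' |x t| * (σ * D)) * σ) t := by
    refine HasDerivAt.congr_of_eventuallyEq (hrpow.mul_const σ) ?_
    filter_upwards [hev] with s hs
    rw [hs.2]
  convert hw using 1
  have hsgnw : Real.sign ((κ |x t|) ^ (1 - ρ₂) * σ) = σ := by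
    have hp : (0:ℝ) < (κ |x t|) ^ (1 - ρ₂) := Real.rpow_pos_of_pos hκpos _
    rcases hσ with h | h <;> rw [h]
    · simpa using Real.sign_of_pos hp
    · simp only [mul_neg_one]
      exact Real.sign_of_neg (by linarith)
  rw [hsgnw]
  have key : κ |x t| ^ (1 - ρ₂ - 1) * κ |x t| ^ ρ₂ = 1 := by
    rw [← Real.rpow_add hκpos]
    norm_num
  have hσ2 : σ * σ = 1 := by rcases hσ with h | h <;> rw [h] <;> norm_num
  have hκ'ne : κ' |x t| ≠ 0 := (hκ'pos _ hpos).ne'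
  rw [hD]
  have e : (1:ℝ) - ρ₂ - 1 = -ρ₂ := by ring
  rw [e]
  rw [e] at key
  have hne1 : (1:ℝ) - ρ₂ ≠ 0 := by linarith
  generalize κ |x t| ^ (-ρ₂) = A at key ⊢
  generalize κ |x t| ^ ρ₂ = B at key ⊢
  rcases hσ with h | h <;> rw [h] <;> field_simp <;>
    first
      | linear_combination ((1 - ρ₂) * ρ₁ * κ' |x t|) * key
      | linear_combination ((ρ₂ - 1) * ρ₁ * κ' |x t|) * key
      | nlinarith [key, mul_pos hρ₁ (hκ'pos _ hpos)]
end

section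
/- Let κ : ℝ≥0 → ℝ be of class K¹ and continuously differentiable on [0, ∞) with κ'(r) > 0 for all r ≥ 0 and κ'(0) ≥ κ'(r) for all r ≥ 0. Let ρ₁ > 0, δ > 0, ρ₃ ≥ δ, and let Δ ∈ ℝ with |Δ| ≤ δ. Then for every x ≠ 0, −(1/ρ₁ + ρ₃·κ'(0))·(1/κ'(|x|))·sign(x)·sign(x) + Δ·sign(x) ≤ −1/(ρ₁·κ'(|x|)); that is, along the closed loop of ẋ = u + Δ with the controller u = −(1/ρ₁ + ρ₃·κ'(0))·(1/κ'(|x|))·sign(x), the derivative of |x| is bounded above by −1/(ρ₁·κ'(|x|)). -/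
/-- For the perturbed system `ẋ = u + Δ` with the predefined-time controller
`u = -(1/ρ₁ + ρ₃·κ'(0))·(1/κ'(|x|))·sign(x)`, the derivative of `|x|` along
the closed loop is bounded above by `-1/(ρ₁·κ'(|x|))` for all `x ≠ 0`. -/
theorem controller_decrease_bound (κ κ' : ℝ → ℝ) (hκ : ClassK1 κ)
    (hderiv : ∀ r ∈ Set.Ici (0 : ℝ), HasDerivWithinAt κ (κ' r) (Set.Ici 0) r)
    (hκ'cont : ContinuousOn κ' (Set.Ici 0))
    (hκ'pos : ∀ r : ℝ, 0 ≤ r → 0 < κ' r)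
    (hκ'max : ∀ r : ℝ, 0 ≤ r → κ' r ≤ κ' 0)
    (ρ₁ ρ₃ δ : ℝ) (hρ₁ : 0 < ρ₁) (hδ : 0 < δ) (hρ₃ : δ ≤ ρ₃)
    (Δ : ℝ) (hΔ : |Δ| ≤ δ) :
    ∀ x : ℝ, x ≠ 0 →
      -(1 / ρ₁ + ρ₃ * κ' 0) * (1 / κ' |x|) * Real.sign x * Real.sign x +
          Δ * Real.sign x ≤
        -(1 / (ρ₁ * κ' |x|)) := by
  intro x hx
  have habs : (0:ℝ) ≤ |x| := abs_nonneg x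
  have hpos := hκ'pos _ habs
  have hmax := hκ'max _ habs
  have hsa : |Real.sign x| = 1 := by
    rcases lt_or_gt_of_ne hx with h | h
    · rw [Real.sign_of_neg h]; norm_num
    · rw [Real.sign_of_pos h]; norm_num
  have hs : Real.sign x * Real.sign x = 1 := by
    have := abs_mul_abs_self (Real.sign x)
    rw [hsa] at this; linarith
  have h1 : Δ * Real.sign x ≤ δ := by
    calc Δ * Real.sign x ≤ |Δ * Real.sign x| := le_abs_self _
      _ = |Δ| * |Real.sign x| := abs_mul _ _
      _ ≤ δ := by rw [hsa, mul_one]; exact hΔ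
  have h2 : δ ≤ ρ₃ * (κ' 0 / κ' |x|) := by
    have h3 : (1:ℝ) ≤ κ' 0 / κ' |x| := (one_le_div hpos).mpr hmax
    nlinarith
  have key : -(1 / ρ₁ + ρ₃ * κ' 0) * (1 / κ' |x|) =
      -(1 / (ρ₁ * κ' |x|)) - ρ₃ * (κ' 0 / κ' |x|) := by
    field_simp
    ring
  rw [mul_assoc, hs, mul_one, key]
  linarith
end

section
/- (Proposition, perturbed consistent discretization) Let κ : ℝ≥0 → ℝ be of class K¹ and continuously differentiable with κ'(0) ≥ κ'(r) for all r ≥ 0. Let ρ₁ > 0, δ > 0, ρ₃ ≥ δ, h > 0, set β = 1/ρ₁ + ρ₃·κ'(0), and let (f_k) be any real sequence with |f_k| ≤ κ'(0)·δ for all k. Define x₀ = x⁰ ∈ ℝ and x_{k+1} = κ^{−1}(max{|κ(|x_k|)·sign(x_k) + h·f_k| − h·β, 0})·sign(κ(|x_k|)·sign(x_k) + h·f_k), where κ^{−1} is the inverse of κ as a bijection [0,∞) → [0,1). Then x_k = 0 for every k ≥ ⌈ρ₁/h⌉. -/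
lemma abs_real_sign_le_one (t : ℝ) : |Real.sign t| ≤ 1 := by
  rcases lt_trichotomy t 0 with h | h | h
  · simp [Real.sign_of_neg h]
  · simp [h]
  · simp [Real.sign_of_pos h]

/-- (Proposition: perturbed consistent discretization.)  With
`β = 1/ρ₁ + ρ₃·κ'(0)` and any perturbation samples `|f_k| ≤ κ'(0)·δ`, the
consistent discretization
`x_{k+1} = κinv(max{|κ(|x_k|)·sign(x_k) + h·f_k| - h·β, 0})·sign(κ(|x_k|)·sign(x_k) + h·f_k)`
satisfies `x_k = 0` for every `k ≥ ⌈ρ₁/h⌉`. -/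
theorem perturbed_discretization_settles (κ κinv κ' : ℝ → ℝ) (hκ : ClassK1 κ)
    (hinv_left : ∀ r : ℝ, 0 ≤ r → κinv (κ r) = r)
    (hinv_right : ∀ y : ℝ, 0 ≤ y → y < 1 → 0 ≤ κinv y ∧ κ (κinv y) = y)
    (hderiv : ∀ r ∈ Set.Ici (0 : ℝ), HasDerivWithinAt κ (κ' r) (Set.Ici 0) r)
    (hκ'cont : ContinuousOn κ' (Set.Ici 0))
    (hκ'max : ∀ r : ℝ, 0 ≤ r → κ' r ≤ κ' 0)
    (ρ₁ ρ₃ δ h β : ℝ) (hρ₁ : 0 < ρ₁) (hδ : 0 < δ) (hρ₃ : δ ≤ ρ₃) (hh : 0 < h)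
    (hβ : β = 1 / ρ₁ + ρ₃ * κ' 0)
    (f : ℕ → ℝ) (hf : ∀ k : ℕ, |f k| ≤ κ' 0 * δ)
    (x0 : ℝ) (x : ℕ → ℝ) (hx0 : x 0 = x0)
    (hrec : ∀ k : ℕ, x (k + 1) =
      κinv (max (|κ |x k| * Real.sign (x k) + h * f k| - h * β) 0) *
        Real.sign (κ |x k| * Real.sign (x k) + h * f k)) :
    ∀ k : ℕ, ⌈ρ₁ / h⌉₊ ≤ k → x k = 0 := by
  obtain ⟨hc, hmono, h0, hlim⟩ := hκ
  have hmonoOn : MonotoneOn κ (Set.Ici 0) := hmono.monotoneOn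
  have hκ'0 : 0 ≤ κ' 0 := by nlinarith [abs_nonneg (f 0), hf 0]
  have hlt1 : ∀ r : ℝ, 0 ≤ r → κ r < 1 := by
    intro r hr
    have h1 : κ (r + 1) ≤ 1 := by
      refine ge_of_tendsto hlim ?_
      filter_upwards [Filter.eventually_ge_atTop (r + 1)] with t ht
      exact hmonoOn (Set.mem_Ici.2 (by linarith)) (Set.mem_Ici.2 (by linarith)) ht
    have h2 := hmono (Set.mem_Ici.2 hr) (Set.mem_Ici.2 (by linarith : (0:ℝ) ≤ r + 1))
      (by linarith)
    linarith
  have hV0 : ∀ k, 0 ≤ κ |x k| := by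
    intro k
    have := hmonoOn Set.self_mem_Ici (Set.mem_Ici.2 (abs_nonneg (x k))) (abs_nonneg (x k))
    simpa [h0] using this
  set c := h / ρ₁ with hcdef
  have hcpos : 0 < c := div_pos hh hρ₁
  have key : ∀ k, κ |x (k + 1)| ≤ max (κ |x k| - c) 0 := by
    intro k
    set y := κ |x k| * Real.sign (x k) with hy
    set m := max (|y + h * f k| - h * β) 0 with hm
    have hy_abs : |y| ≤ κ |x k| := by
      rw [hy, abs_mul, abs_of_nonneg (hV0 k)]
      calc κ |x k| * |Real.sign (x k)| ≤ κ |x k| * 1 :=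
            mul_le_mul_of_nonneg_left (abs_real_sign_le_one _) (hV0 k)
        _ = κ |x k| := mul_one _
    have hstep : |y + h * f k| - h * β ≤ κ |x k| - c := by
      have h1 : |y + h * f k| ≤ |y| + h * |f k| := by
        calc |y + h * f k| ≤ |y| + |h * f k| := abs_add_le _ _
          _ = |y| + |h| * |f k| := by rw [abs_mul h (f k)]
          _ = |y| + h * |f k| := by rw [abs_of_pos hh]
      have h2 : h * |f k| ≤ h * (κ' 0 * ρ₃) :=
        mul_le_mul_of_nonneg_left
          (le_trans (hf k) (mul_le_mul_of_nonneg_left hρ₃ hκ'0)) hh.le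
      have hc1 : c = h * (1 / ρ₁) := by rw [hcdef]; ring
      rw [hβ] at *
      nlinarith [hy_abs]
    have hm_bd : m ≤ max (κ |x k| - c) 0 := max_le_max hstep le_rfl
    have hm_nonneg : 0 ≤ m := le_max_right _ _
    have hm_lt1 : m < 1 := by
      refine lt_of_le_of_lt hm_bd (max_lt ?_ one_pos)
      have := hlt1 |x k| (abs_nonneg _)
      linarith
    obtain ⟨hinv_nn, hinv_eq⟩ := hinv_right m hm_nonneg hm_lt1
    have habs : |x (k + 1)| ≤ κinv m := by
      rw [hrec k, ← hy, ← hm, abs_mul, abs_of_nonneg hinv_nn]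
      calc κinv m * |Real.sign (y + h * f k)| ≤ κinv m * 1 :=
            mul_le_mul_of_nonneg_left (abs_real_sign_le_one _) hinv_nn
        _ = κinv m := mul_one _
    calc κ |x (k + 1)| ≤ κ (κinv m) :=
          hmonoOn (Set.mem_Ici.2 (abs_nonneg _)) (Set.mem_Ici.2 hinv_nn) habs
      _ = m := hinv_eq
      _ ≤ max (κ |x k| - c) 0 := hm_bd
  have bound : ∀ k : ℕ, κ |x k| ≤ max (κ |x 0| - k * c) 0 := by
    intro k
    induction k with
    | zero => simpa using le_max_left (κ |x 0|) 0
    | succ n ih =>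
      calc κ |x (n + 1)| ≤ max (κ |x n| - c) 0 := key n
        _ ≤ max (max (κ |x 0| - n * c) 0 - c) 0 :=
            max_le_max (sub_le_sub_right ih c) le_rfl
        _ ≤ max (κ |x 0| - n * c - c) 0 := by
            rcases le_total (κ |x 0| - n * c) 0 with hle | hle
            · rw [max_eq_right hle]
              exact max_le (le_trans (by linarith) (le_max_right _ _)) (le_max_right _ _)
            · rw [max_eq_left hle]
        _ = max (κ |x 0| - (n + 1 : ℕ) * c) 0 := by push_cast; ring_nf
  intro k hk
  have hk' : (ρ₁ / h : ℝ) ≤ k := le_trans (Nat.le_ceil _) (by exact_mod_cast hk)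
  have h1 : (1 : ℝ) ≤ k * c := by
    have := mul_le_mul_of_nonneg_right hk' (le_of_lt hcpos)
    have heq : ρ₁ / h * c = 1 := by
      rw [hcdef]; field_simp
    linarith
  have h2 : κ |x 0| - k * c < 0 := by
    have := hlt1 |x 0| (abs_nonneg _)
    linarith
  have h3 : κ |x k| ≤ 0 := by
    have := bound k
    rw [max_eq_right (le_of_lt h2)] at this
    exact this
  have h4 : κ |x k| = κ 0 := by rw [h0]; linarith [hV0 k]
  have h5 : |x k| = 0 :=
    hmono.injOn (Set.mem_Ici.2 (abs_nonneg _)) Set.self_mem_Ici h4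
  exact abs_eq_zero.mp h5
end

section
/- Let κ : ℝ≥0 → ℝ be of class K¹ and continuously differentiable with κ'(0) ≥ κ'(r) for all r ≥ 0. Let ρ₁ > 0, δ > 0, ρ₃ ≥ δ, h > 0, β = 1/ρ₁ + ρ₃·κ'(0), and let f_k ∈ ℝ with |f_k| ≤ κ'(0)·δ. If x_{k+1} = κ^{−1}(max{|κ(|x_k|)·sign(x_k) + h·f_k| − h·β, 0})·sign(κ(|x_k|)·sign(x_k) + h·f_k), where κ^{−1} is the inverse of κ as a bijection [0,∞) → [0,1), then |x_{k+1}| ≤ κ^{−1}(max{κ(|x_k|) − h/ρ₁, 0}). -/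
/-- One-step estimate for the perturbed consistent discretization: with
`β = 1/ρ₁ + ρ₃·κ'(0)` and `|f_k| ≤ κ'(0)·δ`, the step
`x_{k+1} = κinv(max{|κ(|x_k|)·sign(x_k) + h·f_k| - h·β, 0})·sign(κ(|x_k|)·sign(x_k) + h·f_k)`
satisfies `|x_{k+1}| ≤ κinv(max{κ(|x_k|) - h/ρ₁, 0})`. -/
theorem perturbed_step_estimate (κ κinv κ' : ℝ → ℝ) (hκ : ClassK1 κ)
    (hinv_left : ∀ r : ℝ, 0 ≤ r → κinv (κ r) = r)
    (hinv_right : ∀ y : ℝ, 0 ≤ y → y < 1 → 0 ≤ κinv y ∧ κ (κinv y) = y)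
    (hderiv : ∀ r ∈ Set.Ici (0 : ℝ), HasDerivWithinAt κ (κ' r) (Set.Ici 0) r)
    (hκ'cont : ContinuousOn κ' (Set.Ici 0))
    (hκ'max : ∀ r : ℝ, 0 ≤ r → κ' r ≤ κ' 0)
    (ρ₁ ρ₃ δ h β : ℝ) (hρ₁ : 0 < ρ₁) (hδ : 0 < δ) (hρ₃ : δ ≤ ρ₃) (hh : 0 < h)
    (hβ : β = 1 / ρ₁ + ρ₃ * κ' 0)
    (fk : ℝ) (hfk : |fk| ≤ κ' 0 * δ)
    (xk xk1 : ℝ)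
    (hstep : xk1 =
      κinv (max (|κ |xk| * Real.sign xk + h * fk| - h * β) 0) *
        Real.sign (κ |xk| * Real.sign xk + h * fk)) :
    |xk1| ≤ κinv (max (κ |xk| - h / ρ₁) 0) := by
  obtain ⟨hcont, hmono, hzero, htend⟩ := hκ
  have hx0 : (0:ℝ) ≤ |xk| := abs_nonneg _
  have ha0 : 0 ≤ κ |xk| := by
    have := hmono.monotoneOn (Set.mem_Ici.mpr le_rfl) (Set.mem_Ici.mpr hx0) hx0
    simpa [hzero] using this
  have ha1 : κ |xk| < 1 := by
    have h1 : κ (|xk| + 1) ≤ 1 := by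
      refine ge_of_tendsto htend ?_
      filter_upwards [Filter.eventually_ge_atTop (|xk| + 1)] with t ht
      exact hmono.monotoneOn (Set.mem_Ici.mpr (by linarith)) (Set.mem_Ici.mpr (by linarith)) ht
    have h2 : κ |xk| < κ (|xk| + 1) :=
      hmono (Set.mem_Ici.mpr hx0) (Set.mem_Ici.mpr (by linarith)) (by linarith)
    linarith
  have hκ'0 : 0 ≤ κ' 0 := by nlinarith [abs_nonneg fk]
  set z := κ |xk| * Real.sign xk + h * fk with hz
  have hsign : ∀ x : ℝ, |Real.sign x| ≤ 1 := by
    intro x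
    rcases lt_trichotomy x 0 with hx | hx | hx
    · rw [Real.sign_of_neg hx]; simp
    · rw [hx, Real.sign_zero]; simp
    · rw [Real.sign_of_pos hx]; simp
  have hzabs : |z| ≤ κ |xk| + h * (κ' 0 * ρ₃) := by
    have h1 : |κ |xk| * Real.sign xk| ≤ κ |xk| := by
      rw [abs_mul, abs_of_nonneg ha0]
      nlinarith [hsign xk, abs_nonneg (Real.sign xk)]
    have h2 : |h * fk| ≤ h * (κ' 0 * ρ₃) := by
      rw [abs_mul, abs_of_pos hh]
      have : |fk| ≤ κ' 0 * ρ₃ := le_trans hfk (by nlinarith)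
      nlinarith
    calc |z| ≤ |κ |xk| * Real.sign xk| + |h * fk| := abs_add_le _ _
      _ ≤ κ |xk| + h * (κ' 0 * ρ₃) := by linarith
  have hkey : max (|z| - h * β) 0 ≤ max (κ |xk| - h / ρ₁) 0 := by
    apply max_le_max _ le_rfl
    rw [hβ]; ring_nf; nlinarith
  -- bounds on the two max arguments
  have hm0 : 0 ≤ max (|z| - h * β) 0 := le_max_right _ _
  have hM0 : 0 ≤ max (κ |xk| - h / ρ₁) 0 := le_max_right _ _
  have hM1 : max (κ |xk| - h / ρ₁) 0 < 1 := by
    rcases max_cases (κ |xk| - h / ρ₁) 0 with ⟨he, _⟩ | ⟨he, _⟩ <;> rw [he]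
    · have : 0 < h / ρ₁ := div_pos hh hρ₁
      linarith
    · norm_num
  have hm1 : max (|z| - h * β) 0 < 1 := lt_of_le_of_lt hkey hM1
  obtain ⟨hinvm0, hinvm⟩ := hinv_right _ hm0 hm1
  obtain ⟨hinvM0, hinvM⟩ := hinv_right _ hM0 hM1
  have hmonoinv : κinv (max (|z| - h * β) 0) ≤ κinv (max (κ |xk| - h / ρ₁) 0) := by
    by_contra hc
    push_neg at hc
    have := hmono (Set.mem_Ici.mpr hinvM0) (Set.mem_Ici.mpr hinvm0) hc
    rw [hinvm, hinvM] at this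
    linarith
  rw [hstep, abs_mul, abs_of_nonneg hinvm0]
  calc κinv (max (|z| - h * β) 0) * |Real.sign z|
      ≤ κinv (max (|z| - h * β) 0) * 1 := by nlinarith [hsign z, abs_nonneg (Real.sign z)]
    _ = κinv (max (|z| - h * β) 0) := mul_one _
    _ ≤ κinv (max (κ |xk| - h / ρ₁) 0) := hmonoinv
end
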